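/- (Proposition 1: sparsity of the approximate solution) Let P : ℝⁿ → ℝᵐ be continuously differentiable, u⁰ = 0, s = ‖P(0)‖_∞ > 0, and let μ, L > 0 and ρ > 0 satisfy: ‖P'(u)ᵀh‖_∞ ≥ μ‖h‖₁ for all h ∈ ℝᵐ and all u ∈ B_ρ = {u : ‖u‖₁ ≤ ρ}; ‖(P'(a) − P'(b))v‖_∞ ≤ L‖a−b‖₁‖v‖₁ for all a, b ∈ B_ρ, v ∈ ℝⁿ; and ρ ≥ (μ/L)·(k_max + 2H₀(v̄/2)), where k_max = max{0, ⌈2Ls/μ²⌉ − 2} and v̄ = Ls/μ² − k_max/2; assume v̄ < 1, 0 < ε < μ²v̄/L, and set K_ε = k_max + ⌈log₂(log_{v̄/2}(εL/(2μ²)))⌉. Then there exists a vector û ∈ ℝⁿ with at most K_ε·m nonzero coordinates such that ‖P(û)‖_∞ ≤ ε; namely, û = u^{K_ε} for a damped sparse-Newton sequence from u⁰ = 0 in which each step direction wᵏ is a minimal-ℓ1-norm solution of P'(uᵏ)w = P(uᵏ) having at most m nonzero coordinates. -/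

import Mathlib

open Filter Topology

/-- The ℓ1-norm on `ℝ^d`: `‖x‖₁ = Σᵢ |xᵢ|`. -/
noncomputable def l1Norm {d : ℕ} (x : Fin d → ℝ) : ℝ := ∑ i, |x i|

/-- The ℓ∞-norm on `ℝ^d`: `‖x‖_∞ = maxᵢ |xᵢ|`. -/
noncomputable def linfNorm {d : ℕ} (x : Fin d → ℝ) : ℝ := ⨆ i, |x i|

/-- `H₀(δ) = Σ_{ℓ=0}^∞ δ^(2^ℓ)`. -/
noncomputable def H0 (δ : ℝ) : ℝ := ∑' ℓ : ℕ, δ ^ (2 ^ ℓ)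

/-- The transpose of a continuous linear map `A : ℝⁿ → ℝᵐ` applied to `h ∈ ℝᵐ`:
`(Aᵀ h)ᵢ = Σⱼ Aⱼᵢ hⱼ` where `Aⱼᵢ = (A eᵢ)ⱼ`. -/
noncomputable def transposeApply {n m : ℕ} (A : (Fin n → ℝ) →L[ℝ] (Fin m → ℝ))
    (h : Fin m → ℝ) : Fin n → ℝ :=
  fun i => ∑ j, A (Pi.single i 1) j * h j

/-! A Jacobian `A = P'(u)` with `μ‖h‖₁ ≤ ‖Aᵀh‖_∞` maps the ℓ1-ball of radius `r` onto a set
containing the ℓ∞-ball of radius `μ r` (Hahn–Banach), so `A w = P u` has a solution with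
`μ‖w‖₁ ≤ ‖P u‖_∞`. A minimal-ℓ1 solution can be pushed along kernel directions supported in its
support without changing its norm until that support has at most `m` elements.

In terms of the normalised residual `a = L‖P u‖_∞/μ²`, the Lipschitz bound on `P'` gives a Taylor
estimate: a damped step has length at most `(μ/L) min(a, 1)` and sends `a` to at most `a - 1/2` if
`a > 1` and `a²/2` if `a ≤ 1`. After `kmax` linear steps the residual is `v̄ < 1`, after `j` more
it is below `2 (v̄/2)^(2^j)`; the total length `(μ/L)(kmax + 2 H₀(v̄/2)) ≤ ρ` keeps all iterates
in `B_ρ`. Each step adds at most `m` nonzero coordinates. -/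

open Set Function

section Norms

variable {d : ℕ}

lemma linfNorm_eq_norm (x : Fin d → ℝ) : linfNorm x = ‖x‖ := by
  rcases isEmpty_or_nonempty (Fin d) with hd | hd
  · rw [linfNorm, Real.iSup_of_isEmpty, Subsingleton.elim x 0, norm_zero]
  · refine le_antisymm (ciSup_le fun i => norm_le_pi_norm x i) ?_
    have hbdd : BddAbove (range fun i => |x i|) := (finite_range _).bddAbove
    exact (pi_norm_le_iff_of_nonneg ((abs_nonneg _).trans (le_ciSup hbdd hd.some))).2
      fun i => le_ciSup hbdd i

lemma linfNorm_nonneg (x : Fin d → ℝ) : 0 ≤ linfNorm x :=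
  linfNorm_eq_norm x ▸ norm_nonneg x

lemma linfNorm_eq_zero {x : Fin d → ℝ} : linfNorm x = 0 ↔ x = 0 := by
  rw [linfNorm_eq_norm, norm_eq_zero]

lemma abs_le_linfNorm (x : Fin d → ℝ) (i : Fin d) : |x i| ≤ linfNorm x :=
  linfNorm_eq_norm x ▸ norm_le_pi_norm x i

lemma l1Norm_nonneg (x : Fin d → ℝ) : 0 ≤ l1Norm x :=
  Finset.sum_nonneg fun _ _ => abs_nonneg _

lemma abs_le_l1Norm (x : Fin d → ℝ) (i : Fin d) : |x i| ≤ l1Norm x :=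
  Finset.single_le_sum (fun j _ => abs_nonneg (x j)) (Finset.mem_univ i)

lemma norm_le_l1Norm (x : Fin d → ℝ) : ‖x‖ ≤ l1Norm x :=
  (pi_norm_le_iff_of_nonneg (l1Norm_nonneg x)).2 fun i => abs_le_l1Norm x i

lemma l1Norm_smul (c : ℝ) (x : Fin d → ℝ) : l1Norm (c • x) = |c| * l1Norm x := by
  simp [l1Norm, Finset.mul_sum, abs_mul]

lemma l1Norm_sub_le (x y : Fin d → ℝ) : l1Norm (x - y) ≤ l1Norm x + l1Norm y :=
  (Finset.sum_le_sum fun _ _ => abs_sub _ _).trans_eq Finset.sum_add_distrib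

lemma continuous_l1Norm : Continuous (l1Norm (d := d)) :=
  continuous_finsetSum _ fun i _ => (continuous_apply i).abs

lemma isCompact_l1Norm_le (r : ℝ) : IsCompact {x : Fin d → ℝ | l1Norm x ≤ r} :=
  (isCompact_closedBall 0 r).of_isClosed_subset (isClosed_le continuous_l1Norm continuous_const)
    fun x hx => mem_closedBall_zero_iff.2 ((norm_le_l1Norm x).trans hx)

lemma convex_l1Norm_le (r : ℝ) : Convex ℝ {x : Fin d → ℝ | l1Norm x ≤ r} := by
  intro x hx y hy a b ha hb hab
  calc l1Norm (a • x + b • y) ≤ ∑ i, (a * |x i| + b * |y i|) :=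
        Finset.sum_le_sum fun i _ => (abs_add_le _ _).trans_eq (by
          simp [abs_mul, abs_of_nonneg ha, abs_of_nonneg hb])
    _ = a * l1Norm x + b * l1Norm y := by
        rw [Finset.sum_add_distrib, l1Norm, l1Norm, Finset.mul_sum, Finset.mul_sum]
    _ ≤ a * r + b * r :=
        add_le_add (mul_le_mul_of_nonneg_left hx ha) (mul_le_mul_of_nonneg_left hy hb)
    _ = r := by rw [← add_mul, hab, one_mul]

lemma abs_sum_mul_le (x y : Fin d → ℝ) : |∑ j, x j * y j| ≤ l1Norm x * linfNorm y :=
  calc |∑ j, x j * y j| ≤ ∑ j, |x j| * |y j| :=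
        (Finset.abs_sum_le_sum_abs _ _).trans_eq (by simp only [abs_mul])
    _ ≤ ∑ j, |x j| * linfNorm y :=
        Finset.sum_le_sum fun j _ => mul_le_mul_of_nonneg_left (abs_le_linfNorm y j) (abs_nonneg _)
    _ = l1Norm x * linfNorm y := by rw [l1Norm, Finset.sum_mul]

lemma l1Norm_add_add_l1Norm_sub {w z : Fin d → ℝ} (h : ∀ i, |z i| ≤ |w i|) :
    l1Norm (w + z) + l1Norm (w - z) = 2 * l1Norm w := by
  have key : ∀ x y : ℝ, |y| ≤ |x| → |x + y| + |x - y| = 2 * |x| := by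
    intro x y hxy
    rcases abs_cases x with ⟨hx, _⟩ | ⟨hx, _⟩ <;> rcases abs_cases y with ⟨hy, _⟩ | ⟨hy, _⟩ <;>
      rcases abs_cases (x + y) with ⟨h1, _⟩ | ⟨h1, _⟩ <;>
      rcases abs_cases (x - y) with ⟨h2, _⟩ | ⟨h2, _⟩ <;> linarith
  simp only [l1Norm, Pi.add_apply, Pi.sub_apply, ← Finset.sum_add_distrib, Finset.mul_sum,
    key _ _ (h _)]

end Norms

section Duality

variable {n m : ℕ}

lemma l1Norm_single (i : Fin n) (a : ℝ) : l1Norm (Pi.single i a) = |a| := by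
  rw [l1Norm, Finset.sum_eq_single i (fun j _ hj => by simp [hj]) (by simp), Pi.single_eq_same]

lemma map_eq_sum_mul {F : Type*} [AddCommMonoid F] [Module ℝ F] (f : (Fin n → ℝ) →ₗ[ℝ] F)
    (x : Fin n → ℝ) : f x = ∑ i, x i • f (Pi.single i 1) := by
  conv_lhs => rw [← Finset.univ_sum_single x]
  refine (map_sum _ _ _).trans (Finset.sum_congr rfl fun i _ => ?_)
  rw [← map_smul, ← Pi.single_smul, smul_eq_mul, mul_one]

lemma sum_map_mul_eq_sum_mul_transposeApply (A : (Fin n → ℝ) →L[ℝ] (Fin m → ℝ))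
    (w : Fin n → ℝ) (h : Fin m → ℝ) :
    ∑ j, A w j * h j = ∑ i, w i * transposeApply A h i := by
  rw [← ContinuousLinearMap.coe_coe, map_eq_sum_mul]
  simp only [Finset.sum_apply, Pi.smul_apply, smul_eq_mul, Finset.sum_mul, transposeApply,
    Finset.mul_sum, mul_assoc, ContinuousLinearMap.coe_coe]
  exact Finset.sum_comm

lemma exists_l1Norm_le_sum_mul_eq (c : Fin n → ℝ) {r : ℝ} (hr : 0 ≤ r) :
    ∃ w, l1Norm w ≤ r ∧ ∑ i, w i * c i = r * linfNorm c := by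
  rcases isEmpty_or_nonempty (Fin n) with hn | hn
  · exact ⟨0, by simpa [l1Norm] using hr, by simp [linfNorm]⟩
  obtain ⟨i₀, hi₀⟩ := Finite.exists_max fun i => |c i|
  have hc : linfNorm c = |c i₀| := le_antisymm (ciSup_le hi₀) (abs_le_linfNorm c i₀)
  refine ⟨Pi.single i₀ (r * SignType.sign (c i₀)), ?_, ?_⟩
  · rw [l1Norm_single, abs_mul, abs_of_nonneg hr]
    exact mul_le_of_le_one_right hr (by rcases SignType.sign (c i₀) with _ | _ | _ <;> simp)
  · rw [Finset.sum_eq_single i₀ (fun j _ hj => by simp [hj]) (by simp), Pi.single_eq_same,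
      hc, mul_assoc, sign_mul_self]

lemma exists_map_eq_of_le_linfNorm_transposeApply (A : (Fin n → ℝ) →L[ℝ] (Fin m → ℝ))
    {μ : ℝ} (hμ : 0 < μ) (hA : ∀ h, μ * l1Norm h ≤ linfNorm (transposeApply A h))
    (b : Fin m → ℝ) : ∃ w, A w = b ∧ μ * l1Norm w ≤ linfNorm b := by
  set r := linfNorm b / μ
  have hr : 0 ≤ r := div_nonneg (linfNorm_nonneg b) hμ.le
  suffices b ∈ A '' {w | l1Norm w ≤ r} by
    obtain ⟨w, hw, rfl⟩ := this
    exact ⟨w, rfl, (le_div_iff₀' hμ).1 hw⟩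
  by_contra hb
  obtain ⟨f, t, hft, htf⟩ := geometric_hahn_banach_closed_point
    ((convex_l1Norm_le r).linear_image A.toLinearMap)
    ((isCompact_l1Norm_le r).image A.continuous).isClosed hb
  set h : Fin m → ℝ := fun j => f (Pi.single j 1)
  have hf : ∀ y, f y = ∑ j, y j * h j := fun y => by
    rw [← ContinuousLinearMap.coe_coe, map_eq_sum_mul]; rfl
  obtain ⟨w₀, hw₀, hw₀h⟩ := exists_l1Norm_le_sum_mul_eq (transposeApply A h) hr
  have hlt : r * linfNorm (transposeApply A h) < t := by
    have := hft _ ⟨w₀, hw₀, rfl⟩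
    rwa [hf, ContinuousLinearMap.coe_coe, sum_map_mul_eq_sum_mul_transposeApply, hw₀h] at this
  have hle : f b ≤ r * linfNorm (transposeApply A h) :=
    calc f b = ∑ j, h j * b j := by simp only [hf, mul_comm]
      _ ≤ l1Norm h * linfNorm b := (le_abs_self _).trans (abs_sum_mul_le h b)
      _ = r * (μ * l1Norm h) := by simp only [r]; field_simp
      _ ≤ r * linfNorm (transposeApply A h) := mul_le_mul_of_nonneg_left (hA h) hr
  linarith

end Duality

section SparseSolutions

variable {n : ℕ} {F : Type*}

def IsL1MinSolution (A : (Fin n → ℝ) → F) (b : F) (w : Fin n → ℝ) : Prop :=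
  A w = b ∧ ∀ v, A v = b → l1Norm w ≤ l1Norm v

lemma exists_isL1MinSolution [TopologicalSpace F] [T2Space F] {A : (Fin n → ℝ) → F}
    (hA : Continuous A) {b : F} {w₀ : Fin n → ℝ} (hw₀ : A w₀ = b) :
    ∃ w, IsL1MinSolution A b w := by
  have hS : IsCompact ({v | A v = b} ∩ {v | l1Norm v ≤ l1Norm w₀}) :=
    (isCompact_l1Norm_le _).inter_left (isClosed_eq hA continuous_const)
  obtain ⟨w, ⟨hw, -⟩, hmin⟩ :=
    hS.exists_isMinOn ⟨w₀, hw₀, le_refl (l1Norm w₀)⟩ continuous_l1Norm.continuousOn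
  refine ⟨w, hw, fun v hv => ?_⟩
  by_cases hvw₀ : l1Norm v ≤ l1Norm w₀
  · exact hmin ⟨hv, hvw₀⟩
  · exact (hmin ⟨hw₀, le_refl (l1Norm w₀)⟩).trans (not_le.1 hvw₀).le

variable [AddCommGroup F] [Module ℝ F] [FiniteDimensional ℝ F]

lemma exists_ne_zero_map_eq_zero_support_subset (A : (Fin n → ℝ) →ₗ[ℝ] F) {T : Set (Fin n)}
    (hT : Module.finrank ℝ F < T.ncard) : ∃ z ≠ 0, A z = 0 ∧ support z ⊆ T := by
  classical
  set E := Function.ExtendByZero.linearMap ℝ (Subtype.val : T → Fin n)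
  have hrank : Module.finrank ℝ F < Module.finrank ℝ (T → ℝ) := by
    rwa [Module.finrank_fintype_fun_eq_card, Fintype.card_eq_nat_card, Nat.card_coe_set_eq]
  obtain ⟨y, hy, hy0⟩ := (Submodule.ne_bot_iff _).1 (LinearMap.ker_ne_bot_of_finrank_lt
    (f := A ∘ₗ E) hrank)
  have hE : ∀ i : T, E y i = y i := Subtype.val_injective.extend_apply y 0
  refine ⟨E y, fun h => hy0 (funext fun i => by simpa [hE] using congrFun h i), hy, ?_⟩
  intro j hj
  by_contra hjT
  exact hj (extend_apply' _ _ _ fun ⟨i, hi⟩ => hjT (hi ▸ i.2))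

variable {A : (Fin n → ℝ) →ₗ[ℝ] F} {b : F} {w : Fin n → ℝ}

/-- For a kernel vector `z` supported in `support w`, take `c` as large as possible with
`|c z i| ≤ |w i|` for all `i`: then `‖w + c z‖₁ + ‖w - c z‖₁ = 2 ‖w‖₁`, so by minimality both norms
equal `‖w‖₁`, and `w - c z` has lost a coordinate. -/
lemma IsL1MinSolution.exists_ncard_support_lt (hw : IsL1MinSolution A b w)
    (hcard : Module.finrank ℝ F < (support w).ncard) :
    ∃ w', IsL1MinSolution A b w' ∧ (support w').ncard < (support w).ncard := by
  obtain ⟨z, hz0, hAz, hzw⟩ := exists_ne_zero_map_eq_zero_support_subset A hcard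
  obtain ⟨i₁, hi₁, hmin⟩ := (support z).exists_min_image (fun i => |w i| / |z i|)
    (toFinite _) (support_nonempty_iff.2 hz0)
  set c := w i₁ / z i₁
  have hcz : ∀ i, |(c • z) i| ≤ |w i| := fun i => by
    by_cases hi : z i = 0
    · simp [hi]
    · rw [Pi.smul_apply, smul_eq_mul, abs_mul, abs_div, ← le_div_iff₀ (abs_pos.2 hi)]
      exact hmin i hi
  have hsol : ∀ v, A (w + v • z) = b := fun v => by
    rw [map_add, map_smul, hAz, smul_zero, add_zero, hw.1]
  have hsum := l1Norm_add_add_l1Norm_sub hcz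
  have hplus := hw.2 _ (hsol c)
  refine ⟨w - c • z, ⟨by simpa [sub_eq_add_neg] using hsol (-c), fun v hv => ?_⟩, ?_⟩
  · linarith [hw.2 v hv]
  · have hi₁w : (w - c • z) i₁ = 0 := by simp [c, div_mul_cancel₀ _ hi₁]
    refine ncard_lt_ncard ⟨fun j hj => ?_, fun h => h (hzw hi₁) hi₁w⟩ (toFinite _)
    by_contra hwj
    have hzj : z j = 0 := notMem_support.1 fun h => hwj (hzw h)
    exact hj (by simp [notMem_support.1 hwj, hzj])

lemma IsL1MinSolution.exists_ncard_support_le (hw : IsL1MinSolution A b w) :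
    ∃ w', IsL1MinSolution A b w' ∧ (support w').ncard ≤ Module.finrank ℝ F := by
  obtain ⟨w', hw', hmin⟩ := (measure fun v : Fin n → ℝ => (support v).ncard).wf.has_min
    {v | IsL1MinSolution A b v} ⟨w, hw⟩
  refine ⟨w', hw', not_lt.1 fun hcard => ?_⟩
  obtain ⟨w'', hw'', hlt⟩ := hw'.exists_ncard_support_lt hcard
  exact hmin w'' hw'' hlt

end SparseSolutions

lemma exists_isL1MinSolution_ncard_support_le {n m : ℕ} (A : (Fin n → ℝ) →L[ℝ] (Fin m → ℝ))
    {μ : ℝ} (hμ : 0 < μ) (hA : ∀ h, μ * l1Norm h ≤ linfNorm (transposeApply A h))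
    (b : Fin m → ℝ) :
    ∃ w, IsL1MinSolution A b w ∧ (support w).ncard ≤ m ∧ μ * l1Norm w ≤ linfNorm b := by
  obtain ⟨w₀, hw₀, hw₀b⟩ := exists_map_eq_of_le_linfNorm_transposeApply A hμ hA b
  obtain ⟨w₁, hw₁⟩ := exists_isL1MinSolution A.continuous hw₀
  obtain ⟨w, hw, hcard⟩ := (hw₁ : IsL1MinSolution A.toLinearMap b w₁).exists_ncard_support_le
  refine ⟨w, hw, by simpa using hcard, ?_⟩
  calc μ * l1Norm w ≤ μ * l1Norm w₀ := mul_le_mul_of_nonneg_left (hw.2 w₀ hw₀) hμ.le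
    _ ≤ linfNorm b := hw₀b

section Majorant

/-- In terms of the normalised residual `a = L ‖P u‖_∞ / μ²`, the damping
`γ = min 1 (μ² / (L ‖P u‖_∞))` is `newtonDamping a`, and the normalised residual after the step is
at most `newtonMajorant a`. -/
noncomputable def newtonMajorant (a : ℝ) : ℝ := if a ≤ 1 then a ^ 2 / 2 else a - 1 / 2

noncomputable def newtonDamping (a : ℝ) : ℝ := if a ≤ 1 then 1 else a⁻¹

variable {a b v : ℝ}

lemma newtonDamping_pos (a : ℝ) : 0 < newtonDamping a := by
  unfold newtonDamping; split_ifs with h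
  · exact one_pos
  · exact inv_pos.2 (by linarith)

lemma newtonDamping_le_one (a : ℝ) : newtonDamping a ≤ 1 := by
  unfold newtonDamping; split_ifs with h
  · exact le_rfl
  · exact inv_le_one_of_one_le₀ (by linarith)

lemma newtonDamping_mul (a : ℝ) : newtonDamping a * a = min a 1 := by
  unfold newtonDamping; split_ifs with h
  · rw [one_mul, min_eq_left h]
  · rw [inv_mul_cancel₀ (by linarith), min_eq_right (by linarith)]

lemma one_sub_newtonDamping_mul_add (a : ℝ) :
    (1 - newtonDamping a) * a + (newtonDamping a * a) ^ 2 / 2 = newtonMajorant a := by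
  rw [newtonDamping_mul, newtonMajorant]
  unfold newtonDamping; split_ifs with h
  · rw [min_eq_left h]; ring
  · rw [min_eq_right (by linarith), sub_mul, inv_mul_cancel₀ (by linarith)]; ring

lemma newtonMajorant_nonneg (a : ℝ) : 0 ≤ newtonMajorant a := by
  unfold newtonMajorant; split_ifs with h
  · positivity
  · linarith

lemma newtonMajorant_mono (ha : 0 ≤ a) (hab : a ≤ b) : newtonMajorant a ≤ newtonMajorant b := by
  unfold newtonMajorant; split_ifs <;> nlinarith

lemma iterate_newtonMajorant_nonneg (ha : 0 ≤ a) : ∀ k : ℕ, 0 ≤ newtonMajorant^[k] a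
  | 0 => ha
  | k + 1 => by rw [iterate_succ_apply']; exact newtonMajorant_nonneg _

lemma iterate_newtonMajorant_add_half (K : ℕ) (hK : K = 0 ∨ 1 / 2 < v) :
    newtonMajorant^[K] (v + K / 2) = v := by
  rcases hK with rfl | hv
  · simp
  induction K with
  | zero => simp
  | succ K ih =>
    have hK0 : (0 : ℝ) ≤ K := K.cast_nonneg
    rw [iterate_succ_apply, newtonMajorant, if_neg (by push_cast; linarith)]
    convert ih using 2
    push_cast; ring

lemma iterate_newtonMajorant_le (hv0 : 0 ≤ v) (hv1 : v ≤ 1) (j : ℕ) :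
    newtonMajorant^[j] v ≤ 2 * (v / 2) ^ 2 ^ j := by
  induction j with
  | zero => simp only [iterate_zero_apply, pow_zero, pow_one]; linarith
  | succ j ih =>
    have hle : 2 * (v / 2) ^ 2 ^ j ≤ 1 := by
      have := pow_le_of_le_one (by positivity : 0 ≤ v / 2) (by linarith)
        (pow_ne_zero j two_ne_zero)
      linarith
    calc newtonMajorant^[j + 1] v ≤ newtonMajorant (2 * (v / 2) ^ 2 ^ j) := by
          rw [iterate_succ_apply']
          exact newtonMajorant_mono (iterate_newtonMajorant_nonneg hv0 j) ih
      _ = 2 * (v / 2) ^ 2 ^ (j + 1) := by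
          rw [newtonMajorant, if_pos hle, pow_succ 2 j, pow_mul]; ring

lemma summable_pow_two_pow (hv0 : 0 ≤ v) (hv1 : v < 1) : Summable fun ℓ : ℕ => v ^ 2 ^ ℓ :=
  (summable_geometric_of_lt_one hv0 hv1).of_nonneg_of_le (fun _ => by positivity)
    fun ℓ => pow_le_pow_of_le_one hv0 hv1.le (Nat.lt_two_pow_self (n := ℓ)).le

lemma sum_min_iterate_newtonMajorant_le {K : ℕ} (hK : K = 0 ∨ 1 / 2 < v) (hv0 : 0 ≤ v)
    (hv1 : v < 1) (k : ℕ) :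
    ∑ j ∈ Finset.range k, min (newtonMajorant^[j] (v + K / 2)) 1 ≤ K + 2 * H0 (v / 2) := by
  have hmin0 : ∀ j, 0 ≤ min (newtonMajorant^[j] (v + K / 2)) 1 := fun j =>
    le_min (iterate_newtonMajorant_nonneg (by positivity) j) zero_le_one
  calc ∑ j ∈ Finset.range k, min (newtonMajorant^[j] (v + K / 2)) 1
      ≤ ∑ j ∈ Finset.range (K + k), min (newtonMajorant^[j] (v + K / 2)) 1 :=
        Finset.sum_le_sum_of_subset_of_nonneg (Finset.range_subset_range.2 (by omega))
          fun j _ _ => hmin0 j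
    _ ≤ ∑ _j ∈ Finset.range K, (1 : ℝ) + ∑ i ∈ Finset.range k, 2 * (v / 2) ^ 2 ^ i := by
        rw [Finset.sum_range_add]
        refine add_le_add (Finset.sum_le_sum fun j _ => min_le_right _ _)
          (Finset.sum_le_sum fun i _ => (min_le_left _ _).trans ?_)
        rw [add_comm, iterate_add_apply, iterate_newtonMajorant_add_half K hK]
        exact iterate_newtonMajorant_le hv0 hv1.le i
    _ ≤ K + 2 * H0 (v / 2) := by
        rw [Finset.sum_const, Finset.card_range, nsmul_one, ← Finset.mul_sum]
        gcongr
        exact (summable_pow_two_pow (by positivity) (by linarith)).sum_le_tsum _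
          fun _ _ => by positivity

lemma one_lt_logb_of_lt {δ e : ℝ} (hδ0 : 0 < δ) (hδ1 : δ < 1) (he : 0 < e) (heδ : e < δ) :
    1 < Real.logb δ e :=
  (Real.lt_logb_iff_rpow_lt_of_base_lt_one hδ0 hδ1 he).2 (by rwa [Real.rpow_one])

lemma pow_two_pow_le_of_logb_le {δ e : ℝ} (hδ0 : 0 < δ) (hδ1 : δ < 1) (he : 0 < e) (heδ : e < δ)
    {j : ℕ} (hj : Real.logb 2 (Real.logb δ e) ≤ j) : δ ^ 2 ^ j ≤ e := by
  rw [Real.logb_le_iff_le_rpow one_lt_two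
    (zero_lt_one.trans (one_lt_logb_of_lt hδ0 hδ1 he heδ))] at hj
  have h2j : (2 : ℝ) ^ (j : ℝ) = ((2 ^ j : ℕ) : ℝ) := by push_cast; exact Real.rpow_natCast 2 j
  rwa [h2j, Real.logb_le_iff_le_rpow_of_base_lt_one hδ0 hδ1 he, Real.rpow_natCast] at hj

lemma eq_zero_or_half_lt_sub_of_eq_max_ceil {a : ℝ} {kmax : ℤ}
    (hkmax : kmax = max 0 (⌈2 * a⌉ - 2)) : kmax = 0 ∨ 1 / 2 < a - kmax / 2 := by
  rcases le_total (⌈2 * a⌉ - 2) 0 with h | h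
  · exact .inl (by rw [hkmax, max_eq_left h])
  · right
    rw [hkmax, max_eq_right h]
    push_cast
    linarith [Int.ceil_lt_add_one (2 * a)]

/-- The step schedule of the proposition: `kmax` damped steps bring the majorant from `a` down
to `v < 1`, and `⌈log₂ log_{v/2} (e/2)⌉` further, quadratically convergent, steps bring it
below `e`. -/
lemma newtonMajorant_schedule {a v e : ℝ} {kmax Kε : ℤ} (hkmax : kmax = max 0 (⌈2 * a⌉ - 2))
    (hv : v = a - kmax / 2) (hv1 : v < 1) (he : 0 < e) (hev : e < v)
    (hKε : Kε = kmax + ⌈Real.logb 2 (Real.logb (v / 2) (e / 2))⌉) :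
    0 ≤ Kε ∧
      (∀ k, ∑ j ∈ Finset.range k, min (newtonMajorant^[j] a) 1 ≤ kmax + 2 * H0 (v / 2)) ∧
      newtonMajorant^[Kε.toNat] a ≤ e := by
  have hkmax0 : 0 ≤ kmax := hkmax ▸ le_max_left _ _
  have hK : ((kmax.toNat : ℕ) : ℝ) = kmax := by exact_mod_cast Int.toNat_of_nonneg hkmax0
  have ha : a = v + kmax.toNat / 2 := by rw [hK, hv]; ring
  have hphase : kmax.toNat = 0 ∨ 1 / 2 < v := by
    rcases eq_zero_or_half_lt_sub_of_eq_max_ceil hkmax with h | h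
    · exact .inl (by simp [h])
    · exact .inr (hv ▸ h)
  have hv0 : 0 < v := he.trans hev
  have hδ : e / 2 < v / 2 := by linarith
  set j := ⌈Real.logb 2 (Real.logb (v / 2) (e / 2))⌉
  have hj : 0 ≤ j := Int.ceil_nonneg (Real.logb_nonneg one_lt_two
    (one_lt_logb_of_lt (by positivity) (by linarith) (by positivity) hδ).le)
  refine ⟨by omega, fun k => ?_, ?_⟩
  · rw [← hK, ha]
    exact sum_min_iterate_newtonMajorant_le hphase hv0.le hv1 k
  · rw [show Kε.toNat = j.toNat + kmax.toNat by omega, iterate_add_apply, ha,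
      iterate_newtonMajorant_add_half _ hphase]
    refine (iterate_newtonMajorant_le hv0.le hv1.le _).trans ?_
    have := pow_two_pow_le_of_logb_le (by positivity) (by linarith) (by positivity) hδ
      (j := j.toNat) ((Int.le_ceil _).trans_eq (by exact_mod_cast (Int.toNat_of_nonneg hj).symm))
    linarith

lemma newtonDamping_eq_min_inv {a : ℝ} (ha : 0 < a) : newtonDamping a = min 1 a⁻¹ := by
  unfold newtonDamping; split_ifs with h
  · exact (min_eq_left ((one_le_inv₀ ha).2 h)).symm
  · exact (min_eq_right (inv_le_one_of_one_le₀ (not_le.1 h).le)).symm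

lemma newtonDamping_eq_ite {d : ℕ} {L μ : ℝ} (hL : 0 < L) (hμ : 0 < μ) (x : Fin d → ℝ) :
    newtonDamping (L * linfNorm x / μ ^ 2) =
      if x = 0 then 1 else min 1 (μ ^ 2 / (L * linfNorm x)) := by
  split_ifs with hx
  · simp [hx, linfNorm, newtonDamping]
  · have hx' : 0 < linfNorm x := (linfNorm_nonneg x).lt_of_ne' (linfNorm_eq_zero.not.2 hx)
    rw [newtonDamping_eq_min_inv (by positivity), inv_div]

end Majorant

section DampedNewton

variable {n m : ℕ} {P : (Fin n → ℝ) → (Fin m → ℝ)} {B : Set (Fin n → ℝ)} {L : ℝ}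

lemma linfNorm_sub_smul_le (hP : Differentiable ℝ P)
    (hLip : ∀ a ∈ B, ∀ b ∈ B, ∀ v : Fin n → ℝ,
      linfNorm ((fderiv ℝ P a - fderiv ℝ P b) v) ≤ L * l1Norm (a - b) * l1Norm v)
    {u w : Fin n → ℝ} (hw : fderiv ℝ P u w = P u) {γ : ℝ} (hγ0 : 0 ≤ γ) (hγ1 : γ ≤ 1)
    (hseg : ∀ t ∈ Icc 0 γ, u - t • w ∈ B) :
    linfNorm (P (u - γ • w)) ≤ (1 - γ) * linfNorm (P u) + L * (γ * l1Norm w) ^ 2 / 2 := by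
  set g : ℝ → (Fin m → ℝ) := fun t => P (u - t • w) - (1 - t) • P u
  have hg : ∀ t, HasDerivAt g ((fderiv ℝ P u - fderiv ℝ P (u - t • w)) w) t := fun t => by
    have hline : HasDerivAt (fun t : ℝ => u - t • w) (-w) t := by
      simpa using ((hasDerivAt_id t).smul_const w).const_sub u
    refine (((hP _).hasFDerivAt.comp_hasDerivAt t hline).sub
      (((hasDerivAt_id t).const_sub 1).smul_const (P u))).congr_deriv ?_
    rw [sub_apply, hw, map_neg, neg_one_smul, sub_neg_eq_add, neg_add_eq_sub]
  have hg' : ∀ t ∈ Ico 0 γ,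
      ‖(fderiv ℝ P u - fderiv ℝ P (u - t • w)) w‖ ≤ L * l1Norm w ^ 2 * t := fun t ht =>
    calc _ = linfNorm ((fderiv ℝ P u - fderiv ℝ P (u - t • w)) w) := (linfNorm_eq_norm _).symm
      _ ≤ L * l1Norm (u - (u - t • w)) * l1Norm w :=
          hLip u (by simpa using hseg 0 ⟨le_rfl, hγ0⟩) _ (hseg t (Ico_subset_Icc_self ht)) w
      _ = L * l1Norm w ^ 2 * t := by
          rw [sub_sub_cancel, l1Norm_smul, abs_of_nonneg ht.1]; ring
  have hquad : ∀ t, HasDerivAt (fun t => L * l1Norm w ^ 2 / 2 * t ^ 2) (L * l1Norm w ^ 2 * t) t :=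
    fun t => ((hasDerivAt_pow 2 t).const_mul _).congr_deriv (by push_cast; ring)
  have hgγ := image_norm_le_of_norm_deriv_right_le_deriv_boundary
    (fun t _ => (hg t).continuousAt.continuousWithinAt) (fun t _ => (hg t).hasDerivWithinAt)
    (by simp [g]) hquad hg' (right_mem_Icc.2 hγ0)
  calc linfNorm (P (u - γ • w)) = ‖g γ + (1 - γ) • P u‖ := by simp [g, linfNorm_eq_norm]
    _ ≤ ‖g γ‖ + ‖(1 - γ) • P u‖ := norm_add_le _ _
    _ = ‖g γ‖ + (1 - γ) * ‖P u‖ := by rw [norm_smul, Real.norm_of_nonneg (sub_nonneg.2 hγ1)]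
    _ ≤ _ := by rw [linfNorm_eq_norm]; nlinarith

variable {μ ρ : ℝ}

lemma newtonDamping_mul_l1Norm_le (hμ : 0 < μ) (hL : 0 < L) {w : Fin n → ℝ} {p : ℝ}
    (hwp : μ * l1Norm w ≤ p) :
    newtonDamping (L * p / μ ^ 2) * l1Norm w ≤ μ / L * min (L * p / μ ^ 2) 1 := by
  have hw : l1Norm w ≤ μ / L * (L * p / μ ^ 2) := by
    rw [show μ / L * (L * p / μ ^ 2) = p / μ by field_simp, le_div_iff₀ hμ]; linarith
  calc newtonDamping (L * p / μ ^ 2) * l1Norm w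
      ≤ newtonDamping (L * p / μ ^ 2) * (μ / L * (L * p / μ ^ 2)) :=
        mul_le_mul_of_nonneg_left hw (newtonDamping_pos _).le
    _ = μ / L * min (L * p / μ ^ 2) 1 := by rw [← newtonDamping_mul]; ring

lemma linfNorm_dampedNewtonStep_le (hP : Differentiable ℝ P) (hμ : 0 < μ) (hL : 0 < L)
    (hLip : ∀ a ∈ B, ∀ b ∈ B, ∀ v : Fin n → ℝ,
      linfNorm ((fderiv ℝ P a - fderiv ℝ P b) v) ≤ L * l1Norm (a - b) * l1Norm v)
    {u w : Fin n → ℝ} (hw : fderiv ℝ P u w = P u) (hwμ : μ * l1Norm w ≤ linfNorm (P u))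
    (hseg : ∀ t ∈ Icc 0 (newtonDamping (L * linfNorm (P u) / μ ^ 2)), u - t • w ∈ B) :
    L * linfNorm (P (u - newtonDamping (L * linfNorm (P u) / μ ^ 2) • w)) / μ ^ 2 ≤
      newtonMajorant (L * linfNorm (P u) / μ ^ 2) := by
  set a := L * linfNorm (P u) / μ ^ 2
  set γ := newtonDamping a
  have hγ0 : 0 < γ := newtonDamping_pos a
  have htaylor := linfNorm_sub_smul_le hP hLip hw hγ0.le (newtonDamping_le_one a) hseg
  have hstep : L * (γ * l1Norm w) / μ ≤ γ * a := by
    rw [div_le_iff₀ hμ]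
    calc L * (γ * l1Norm w) = L * γ * (μ * l1Norm w) / μ := by field_simp
      _ ≤ L * γ * linfNorm (P u) / μ := by gcongr
      _ = γ * a * μ := by simp only [a]; field_simp
  calc L * linfNorm (P (u - γ • w)) / μ ^ 2
      ≤ L * ((1 - γ) * linfNorm (P u) + L * (γ * l1Norm w) ^ 2 / 2) / μ ^ 2 := by gcongr
    _ = (1 - γ) * a + (L * (γ * l1Norm w) / μ) ^ 2 / 2 := by simp only [a]; field_simp
    _ ≤ (1 - γ) * a + (γ * a) ^ 2 / 2 := by
        gcongr
        exact div_nonneg (mul_nonneg hL.le (mul_nonneg hγ0.le (l1Norm_nonneg w))) hμ.le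
    _ = newtonMajorant a := one_sub_newtonDamping_mul_add a

lemma dampedNewton_invariant (hP : Differentiable ℝ P) (hμ : 0 < μ) (hL : 0 < L)
    (hLip : ∀ a ∈ {v | l1Norm v ≤ ρ}, ∀ b ∈ {v | l1Norm v ≤ ρ}, ∀ v : Fin n → ℝ,
      linfNorm ((fderiv ℝ P a - fderiv ℝ P b) v) ≤ L * l1Norm (a - b) * l1Norm v)
    {u w : ℕ → Fin n → ℝ} (hu0 : u 0 = 0)
    (hw : ∀ k, l1Norm (u k) ≤ ρ →
      fderiv ℝ P (u k) (w k) = P (u k) ∧ μ * l1Norm (w k) ≤ linfNorm (P (u k)))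
    (hstep : ∀ k, u (k + 1) = u k - newtonDamping (L * linfNorm (P (u k)) / μ ^ 2) • w k)
    {a₀ : ℝ} (ha₀ : L * linfNorm (P 0) / μ ^ 2 ≤ a₀)
    (hbudget : ∀ k, μ / L * ∑ j ∈ Finset.range k, min (newtonMajorant^[j] a₀) 1 ≤ ρ) (k : ℕ) :
    L * linfNorm (P (u k)) / μ ^ 2 ≤ newtonMajorant^[k] a₀ ∧
      l1Norm (u k) ≤ μ / L * ∑ j ∈ Finset.range k, min (newtonMajorant^[j] a₀) 1 := by
  induction k with
  | zero => exact ⟨by simpa [hu0] using ha₀, by simp [hu0, l1Norm]⟩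
  | succ k ih =>
    obtain ⟨hres, hlen⟩ := ih
    set γ := newtonDamping (L * linfNorm (P (u k)) / μ ^ 2)
    obtain ⟨hwk, hwμ⟩ := hw k (hlen.trans (hbudget k))
    have hγw : l1Norm (u k) + γ * l1Norm (w k) ≤
        μ / L * ∑ j ∈ Finset.range (k + 1), min (newtonMajorant^[j] a₀) 1 := by
      rw [Finset.sum_range_succ, mul_add]
      refine add_le_add hlen ((newtonDamping_mul_l1Norm_le hμ hL hwμ).trans ?_)
      gcongr
    have hu : ∀ t ∈ Icc 0 γ, l1Norm (u k - t • w k) ≤ l1Norm (u k) + γ * l1Norm (w k) :=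
      fun t ht => by
        grw [l1Norm_sub_le, l1Norm_smul, abs_of_nonneg ht.1, ht.2]
        exact l1Norm_nonneg _
    refine ⟨?_, ?_⟩
    · rw [hstep, iterate_succ_apply']
      refine (linfNorm_dampedNewtonStep_le hP hμ hL hLip hwk hwμ fun t ht => ?_).trans
        (newtonMajorant_mono (by have := linfNorm_nonneg (P (u k)); positivity) hres)
      exact (hu t ht).trans (hγw.trans (hbudget _))
    · rw [hstep]
      exact (hu γ ⟨(newtonDamping_pos _).le, le_rfl⟩).trans hγw

lemma ncard_support_le_mul {u w : ℕ → Fin n → ℝ} {c : ℕ → ℝ} (hu0 : u 0 = 0)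
    (hstep : ∀ k, u (k + 1) = u k - c k • w k) (hw : ∀ k, (support (w k)).ncard ≤ m) (k : ℕ) :
    (support (u k)).ncard ≤ k * m := by
  induction k with
  | zero => simp [hu0]
  | succ k ih =>
    calc (support (u (k + 1))).ncard ≤ (support (u k) ∪ support (w k)).ncard :=
          ncard_le_ncard (by
            rw [hstep k]
            exact (support_sub _ _).trans
              (union_subset_union_right _ (support_const_smul_subset _ _)))
      _ ≤ k * m + m := (ncard_union_le _ _).trans (add_le_add ih (hw k))
      _ = (k + 1) * m := by ring

lemma exists_dampedNewton_sequence (hP : Differentiable ℝ P) (hμ : 0 < μ) (hL : 0 < L)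
    (hA : ∀ v ∈ {v | l1Norm v ≤ ρ}, ∀ h : Fin m → ℝ,
      μ * l1Norm h ≤ linfNorm (transposeApply (fderiv ℝ P v) h))
    (hLip : ∀ a ∈ {v | l1Norm v ≤ ρ}, ∀ b ∈ {v | l1Norm v ≤ ρ}, ∀ v : Fin n → ℝ,
      linfNorm ((fderiv ℝ P a - fderiv ℝ P b) v) ≤ L * l1Norm (a - b) * l1Norm v)
    {a₀ : ℝ} (ha₀ : L * linfNorm (P 0) / μ ^ 2 ≤ a₀)
    (hbudget : ∀ k, μ / L * ∑ j ∈ Finset.range k, min (newtonMajorant^[j] a₀) 1 ≤ ρ) :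
    ∃ u w : ℕ → Fin n → ℝ, u 0 = 0 ∧
      (∀ k, IsL1MinSolution (fderiv ℝ P (u k)) (P (u k)) (w k)) ∧
      (∀ k, (support (w k)).ncard ≤ m) ∧
      (∀ k, u (k + 1) = u k - newtonDamping (L * linfNorm (P (u k)) / μ ^ 2) • w k) ∧
      ∀ k, L * linfNorm (P (u k)) / μ ^ 2 ≤ newtonMajorant^[k] a₀ := by
  have hdir : ∀ v, ∃ w, l1Norm v ≤ ρ → IsL1MinSolution (fderiv ℝ P v) (P v) w ∧
      (support w).ncard ≤ m ∧ μ * l1Norm w ≤ linfNorm (P v) := fun v => by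
    by_cases hv : l1Norm v ≤ ρ
    · obtain ⟨w, hw⟩ := exists_isL1MinSolution_ncard_support_le _ hμ (hA v hv) (P v)
      exact ⟨w, fun _ => hw⟩
    · exact ⟨0, fun h => absurd h hv⟩
  choose dir hdir using hdir
  set u : ℕ → Fin n → ℝ :=
    fun k => (fun v => v - newtonDamping (L * linfNorm (P v) / μ ^ 2) • dir v)^[k] 0
  have hstep : ∀ k,
      u (k + 1) = u k - newtonDamping (L * linfNorm (P (u k)) / μ ^ 2) • dir (u k) :=
    fun k => iterate_succ_apply' _ k 0
  have hinv := dampedNewton_invariant hP hμ hL hLip rfl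
    (fun k hk => ⟨(hdir _ hk).1.1, (hdir _ hk).2.2⟩) hstep ha₀ hbudget
  have hu : ∀ k, l1Norm (u k) ≤ ρ := fun k => (hinv k).2.trans (hbudget k)
  exact ⟨u, dir ∘ u, rfl, fun k => (hdir _ (hu k)).1, fun k => (hdir _ (hu k)).2.1, hstep,
    fun k => (hinv k).1⟩

end DampedNewton

theorem statement14_general {n m : ℕ} (P : (Fin n → ℝ) → (Fin m → ℝ)) (hP : ContDiff ℝ 1 P)
    (s : ℝ) (hs : s = linfNorm (P 0))
    (ρ : ℝ) (Bρ : Set (Fin n → ℝ)) (hB : Bρ = {v | l1Norm v ≤ ρ})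
    (μ : ℝ) (hμ : 0 < μ)
    (hA' : ∀ v ∈ Bρ, ∀ h : Fin m → ℝ,
      μ * l1Norm h ≤ linfNorm (transposeApply (fderiv ℝ P v) h))
    (L : ℝ) (hL : 0 < L)
    (hLip : ∀ a ∈ Bρ, ∀ b ∈ Bρ, ∀ v : Fin n → ℝ,
      linfNorm ((fderiv ℝ P a - fderiv ℝ P b) v) ≤ L * l1Norm (a - b) * l1Norm v)
    (kmax : ℤ) (hkmax : kmax = max 0 (⌈2 * (L * s / μ ^ 2)⌉ - 2))
    (vbar : ℝ) (hvbar : vbar = L * s / μ ^ 2 - (kmax : ℝ) / 2)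
    (hρbig : ρ ≥ μ / L * ((kmax : ℝ) + 2 * H0 (vbar / 2)))
    (hvbar1 : vbar < 1) (ε : ℝ) (hε : 0 < ε) (hεsmall : ε < μ ^ 2 * vbar / L)
    (Kε : ℤ)
    (hKε : Kε = kmax + ⌈Real.logb 2 (Real.logb (vbar / 2) (ε * L / (2 * μ ^ 2)))⌉) :
    ∃ (u w : ℕ → Fin n → ℝ) (γ : ℕ → ℝ),
      -- a damped sparse-Newton sequence from `u⁰ = 0` ...
      u 0 = 0 ∧
      (∀ k, fderiv ℝ P (u k) (w k) = P (u k)) ∧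
      (∀ k, ∀ v : Fin n → ℝ, fderiv ℝ P (u k) v = P (u k) →
        l1Norm (w k) ≤ l1Norm v) ∧
      (∀ k, γ k = if P (u k) = 0 then 1
        else min 1 (μ ^ 2 / (L * linfNorm (P (u k))))) ∧
      (∀ k, u (k + 1) = u k - γ k • w k) ∧
      -- ... whose step directions have at most `m` nonzero coordinates ...
      (∀ k, Set.ncard {i : Fin n | w k i ≠ 0} ≤ m) ∧
      -- ... such that `û = u^{K_ε}` is sparse and an `ε`-approximate solution:
      ∃ uhat : Fin n → ℝ, uhat = u Kε.toNat ∧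
        (Set.ncard {i : Fin n | uhat i ≠ 0} : ℤ) ≤ Kε * m ∧
        linfNorm (P uhat) ≤ ε := by
  subst hB hs
  have he : ε * L / μ ^ 2 < vbar := by
    rwa [div_lt_iff₀ (by positivity), mul_comm vbar, ← lt_div_iff₀ hL]
  obtain ⟨hKε0, hsum, hfinal⟩ := newtonMajorant_schedule (Kε := Kε) hkmax hvbar hvbar1
    (by positivity) he (by rw [hKε, div_div, mul_comm (μ ^ 2)])
  obtain ⟨u, w, hu0, hw, hsparse, hstep, hres⟩ := exists_dampedNewton_sequence
    (hP.differentiable one_ne_zero) hμ hL hA' hLip le_rfl fun k =>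
      (mul_le_mul_of_nonneg_left (hsum k) (by positivity)).trans hρbig
  refine ⟨u, w, _, hu0, fun k => (hw k).1, fun k => (hw k).2, fun k => rfl, fun k => ?_, hsparse,
    _, rfl, ?_, ?_⟩
  · rw [hstep, newtonDamping_eq_ite hL hμ]
  · have := ncard_support_le_mul hu0 hstep hsparse Kε.toNat
    calc ((support (u Kε.toNat)).ncard : ℤ) ≤ (Kε.toNat * m : ℕ) := by exact_mod_cast this
      _ = Kε * m := by push_cast; rw [Int.toNat_of_nonneg hKε0]
  · have := (hres Kε.toNat).trans hfinal
    rwa [div_le_div_iff_of_pos_right (by positivity), mul_comm ε, mul_le_mul_iff_right₀ hL] at this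

/-- Proposition 1: sparsity of the approximate solution: there
exists `û` with at most `K_ε·m` nonzero coordinates and `‖P(û)‖_∞ ≤ ε`; namely
`û = u^{K_ε}` for a damped sparse-Newton sequence from `u⁰ = 0` whose step
directions `wᵏ` are minimal-ℓ1-norm solutions of `P'(uᵏ)w = P(uᵏ)` with at most
`m` nonzero coordinates. -/
theorem statement14 {n m : ℕ} (P : (Fin n → ℝ) → (Fin m → ℝ)) (hP : ContDiff ℝ 1 P)
    (s : ℝ) (hs : s = linfNorm (P 0)) (hspos : 0 < s)
    (ρ : ℝ) (hρ : 0 < ρ) (Bρ : Set (Fin n → ℝ)) (hB : Bρ = {v | l1Norm v ≤ ρ})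
    (μ : ℝ) (hμ : 0 < μ)
    (hA' : ∀ v ∈ Bρ, ∀ h : Fin m → ℝ,
      μ * l1Norm h ≤ linfNorm (transposeApply (fderiv ℝ P v) h))
    (L : ℝ) (hL : 0 < L)
    (hLip : ∀ a ∈ Bρ, ∀ b ∈ Bρ, ∀ v : Fin n → ℝ,
      linfNorm ((fderiv ℝ P a - fderiv ℝ P b) v) ≤ L * l1Norm (a - b) * l1Norm v)
    (kmax : ℤ) (hkmax : kmax = max 0 (⌈2 * (L * s / μ ^ 2)⌉ - 2))
    (vbar : ℝ) (hvbar : vbar = L * s / μ ^ 2 - (kmax : ℝ) / 2)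
    (hρbig : ρ ≥ μ / L * ((kmax : ℝ) + 2 * H0 (vbar / 2)))
    (hvbar1 : vbar < 1) (ε : ℝ) (hε : 0 < ε) (hεsmall : ε < μ ^ 2 * vbar / L)
    (Kε : ℤ)
    (hKε : Kε = kmax + ⌈Real.logb 2 (Real.logb (vbar / 2) (ε * L / (2 * μ ^ 2)))⌉) :
    ∃ (u w : ℕ → Fin n → ℝ) (γ : ℕ → ℝ),
      -- a damped sparse-Newton sequence from `u⁰ = 0` ...
      u 0 = 0 ∧
      (∀ k, fderiv ℝ P (u k) (w k) = P (u k)) ∧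
      (∀ k, ∀ v : Fin n → ℝ, fderiv ℝ P (u k) v = P (u k) →
        l1Norm (w k) ≤ l1Norm v) ∧
      (∀ k, γ k = if P (u k) = 0 then 1
        else min 1 (μ ^ 2 / (L * linfNorm (P (u k))))) ∧
      (∀ k, u (k + 1) = u k - γ k • w k) ∧
      -- ... whose step directions have at most `m` nonzero coordinates ...
      (∀ k, Set.ncard {i : Fin n | w k i ≠ 0} ≤ m) ∧
      -- ... such that `û = u^{K_ε}` is sparse and an `ε`-approximate solution:
      ∃ uhat : Fin n → ℝ, uhat = u Kε.toNat ∧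
        (Set.ncard {i : Fin n | uhat i ≠ 0} : ℤ) ≤ Kε * m ∧
        linfNorm (P uhat) ≤ ε :=
  statement14_general P hP s hs ρ Bρ hB μ hμ hA' L hL hLip kmax hkmax vbar hvbar hρbig hvbar1 ε hε
    hεsmall Kε hKε
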